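/- arXiv:2105.01550 — 2 statements merged into one kernel-verified Lean document; each statement's English description precedes it below -/
import Mathlib

section
/- Let H be a hypothesis set of functions from ℝ^d to ℝ such that there exist a distinguishing point x0 ∈ X and a function f0 ∈ H with f0(x0) = 0. If a margin-based loss φ : ℝ → [0,∞) is convex, then φ is not H-calibrated with respect to the adversarial 0/1 loss ℓ_γ. -/
open scoped RealInnerProductSpace

noncomputable section

/-- A loss assigns a value to a predictor `f`, a point `x`, and a label `y` (±1). -/
abbrev Loss (d : ℕ) := ((EuclideanSpace ℝ (Fin d)) → ℝ) → (EuclideanSpace ℝ (Fin d)) → ℝ → ℝ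

variable {d : ℕ}

/-- The inner (conditional) ℓ-risk. -/
def innerRisk (ℓ : Loss d) (f : EuclideanSpace ℝ (Fin d) → ℝ)
    (x : EuclideanSpace ℝ (Fin d)) (η : ℝ) : ℝ :=
  η * ℓ f x 1 + (1 - η) * ℓ f x (-1)

/-- The minimal inner ℓ-risk over a hypothesis set `H`. -/
def minInnerRisk (ℓ : Loss d) (H : Set (EuclideanSpace ℝ (Fin d) → ℝ))
    (x : EuclideanSpace ℝ (Fin d)) (η : ℝ) : ℝ :=
  ⨅ f : H, innerRisk ℓ f x η

/-- ℓ₁ is H-calibrated with respect to ℓ₂. -/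
def Calibrated (H : Set (EuclideanSpace ℝ (Fin d) → ℝ)) (ℓ₁ ℓ₂ : Loss d) : Prop :=
  ∀ ε > (0:ℝ), ∀ η ∈ Set.Icc (0:ℝ) 1, ∀ x : EuclideanSpace ℝ (Fin d), ‖x‖ ≤ 1 →
    ∃ δ > (0:ℝ), ∀ f ∈ H,
      innerRisk ℓ₁ f x η < minInnerRisk ℓ₁ H x η + δ →
      innerRisk ℓ₂ f x η < minInnerRisk ℓ₂ H x η + ε

/-- The adversarial 0/1 loss with perturbation radius γ. -/
def advLoss (γ : ℝ) : Loss d := fun f x y =>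
  ⨆ x' : Metric.closedBall x γ, (if y * f ↑x' ≤ 0 then (1:ℝ) else 0)

/-- A margin-based loss viewed as a loss. -/
def marginLoss (φ : ℝ → ℝ) : Loss d := fun f x y => φ (y * f x)

/-- The supremum-based surrogate of a margin-based loss. -/
def supLoss (γ : ℝ) (φ : ℝ → ℝ) : Loss d := fun f x y =>
  ⨆ x' : Metric.closedBall x γ, φ (y * f ↑x')

/-- Infimum of f over the closed γ-ball around x. -/
def infBall (γ : ℝ) (f : EuclideanSpace ℝ (Fin d) → ℝ) (x : EuclideanSpace ℝ (Fin d)) : ℝ :=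
  ⨅ x' : Metric.closedBall x γ, f ↑x'

/-- Supremum of f over the closed γ-ball around x. -/
def supBall (γ : ℝ) (f : EuclideanSpace ℝ (Fin d) → ℝ) (x : EuclideanSpace ℝ (Fin d)) : ℝ :=
  ⨆ x' : Metric.closedBall x γ, f ↑x'

/-- x is a distinguishing point for H. -/
def Distinguishing (γ : ℝ) (H : Set (EuclideanSpace ℝ (Fin d) → ℝ))
    (x : EuclideanSpace ℝ (Fin d)) : Prop :=
  ‖x‖ ≤ 1 ∧ (∃ f ∈ H, 0 < infBall γ f x) ∧ (∃ g ∈ H, supBall γ g x < 0)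

/-- H is regular for adversarial calibration. -/
def RegularAdv (γ : ℝ) (H : Set (EuclideanSpace ℝ (Fin d) → ℝ)) : Prop :=
  ∃ x, Distinguishing γ H x

/-- H is symmetric. -/
def SymmetricH (H : Set (EuclideanSpace ℝ (Fin d) → ℝ)) : Prop :=
  ∀ f ∈ H, -f ∈ H

/-- Linear hypothesis set. -/
def Hlin (d : ℕ) : Set (EuclideanSpace ℝ (Fin d) → ℝ) :=
  { f | ∃ w : EuclideanSpace ℝ (Fin d), ‖w‖ = 1 ∧ f = fun x => (inner ℝ w x : ℝ) }

/-- Generalized linear hypothesis set. -/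
def Hg (d : ℕ) (g : ℝ → ℝ) (G : ℝ) : Set (EuclideanSpace ℝ (Fin d) → ℝ) :=
  { f | ∃ (w : EuclideanSpace ℝ (Fin d)) (b : ℝ), ‖w‖ = 1 ∧ |b| ≤ G ∧
      f = fun x => g (inner ℝ w x : ℝ) + b }

/-- ReLU-based hypothesis set. -/
def Hrelu (d : ℕ) (G : ℝ) : Set (EuclideanSpace ℝ (Fin d) → ℝ) :=
  Hg d (fun t => max t 0) G

/-- One-layer ReLU neural network hypothesis set. -/
def Hnn (d n : ℕ) (Λ W : ℝ) : Set (EuclideanSpace ℝ (Fin d) → ℝ) :=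
  { f | ∃ (u : Fin n → ℝ) (w : Fin n → EuclideanSpace ℝ (Fin d)),
      (∑ j, |u j|) ≤ Λ ∧ (∀ j, ‖w j‖ ≤ W) ∧
      f = fun x => ∑ j, u j * max (inner ℝ (w j) x : ℝ) 0 }

/-- All (Borel) measurable functions. -/
def Hall (d : ℕ) : Set (EuclideanSpace ℝ (Fin d) → ℝ) :=
  { f | Measurable f }

/-- The ρ-margin loss. -/
def phiRho (ρ t : ℝ) : ℝ := min 1 (max 0 (1 - t / ρ))

/-! At the distinguishing point `x0` and `η = 1/2`, convexity (Jensen at the midpoint of `t` and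
`-t`) gives every `f` margin risk at least `φ 0`, which `f0` attains since `f0 x0 = 0`. So `f0`
is an exact minimiser of the surrogate risk. But `f0` vanishes at `x0`, so both labels are
misclassified inside the γ-ball and its adversarial risk is `1`, whereas the function of the
distinguishing property that is positive on the whole ball has adversarial risk at most `1/2`.
Calibration therefore fails with `ε = 1/2`. -/

theorem not_calibrated_of_minimizer {H : Set (EuclideanSpace ℝ (Fin d) → ℝ)} {ℓ₁ ℓ₂ : Loss d}
    {x : EuclideanSpace ℝ (Fin d)} (hx : ‖x‖ ≤ 1) {η : ℝ} (hη : η ∈ Set.Icc (0 : ℝ) 1)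
    {f : EuclideanSpace ℝ (Fin d) → ℝ} (hf : f ∈ H)
    (hmin : innerRisk ℓ₁ f x η = minInnerRisk ℓ₁ H x η)
    (hgap : minInnerRisk ℓ₂ H x η < innerRisk ℓ₂ f x η) :
    ¬ Calibrated H ℓ₁ ℓ₂ := by
  intro hcal
  obtain ⟨δ, hδ, hcal⟩ := hcal _ (sub_pos.2 hgap) η hη x hx
  have := hcal f hf (by linarith)
  linarith

theorem innerRisk_nonneg {ℓ : Loss d} {f : EuclideanSpace ℝ (Fin d) → ℝ}
    {x : EuclideanSpace ℝ (Fin d)} (hℓ : ∀ y, 0 ≤ ℓ f x y) {η : ℝ} (hη : η ∈ Set.Icc (0 : ℝ) 1) :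
    0 ≤ innerRisk ℓ f x η :=
  add_nonneg (mul_nonneg hη.1 (hℓ 1)) (mul_nonneg (sub_nonneg.2 hη.2) (hℓ (-1)))

theorem minInnerRisk_le_innerRisk {ℓ : Loss d} {H : Set (EuclideanSpace ℝ (Fin d) → ℝ)}
    {x : EuclideanSpace ℝ (Fin d)} (hℓ : ∀ f y, 0 ≤ ℓ f x y) {η : ℝ}
    (hη : η ∈ Set.Icc (0 : ℝ) 1) {f : EuclideanSpace ℝ (Fin d) → ℝ} (hf : f ∈ H) :
    minInnerRisk ℓ H x η ≤ innerRisk ℓ f x η :=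
  ciInf_le ⟨0, by rintro _ ⟨g, rfl⟩; exact innerRisk_nonneg (hℓ g) hη⟩ (⟨f, hf⟩ : H)

section Margin

variable {φ : ℝ → ℝ}

theorem innerRisk_marginLoss_of_eq_zero {f : EuclideanSpace ℝ (Fin d) → ℝ}
    {x : EuclideanSpace ℝ (Fin d)} (hfx : f x = 0) (η : ℝ) :
    innerRisk (marginLoss φ) f x η = φ 0 := by
  simp only [innerRisk, marginLoss, hfx, mul_zero]
  ring

theorem ConvexOn.apply_zero_le_innerRisk_marginLoss_half (hφ : ConvexOn ℝ Set.univ φ)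
    (f : EuclideanSpace ℝ (Fin d) → ℝ) (x : EuclideanSpace ℝ (Fin d)) :
    φ 0 ≤ innerRisk (marginLoss φ) f x (1 / 2) := by
  have hmid := hφ.2 (Set.mem_univ (f x)) (Set.mem_univ (-f x))
    (by norm_num : (0 : ℝ) ≤ 1 / 2) (by norm_num : (0 : ℝ) ≤ 1 / 2) (by norm_num)
  simp only [smul_eq_mul, ← mul_add, add_neg_cancel, mul_zero] at hmid
  simp only [innerRisk, marginLoss, one_mul, neg_one_mul]
  linarith

theorem ConvexOn.minInnerRisk_marginLoss_half (hφ : ConvexOn ℝ Set.univ φ)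
    {H : Set (EuclideanSpace ℝ (Fin d) → ℝ)} {x : EuclideanSpace ℝ (Fin d)}
    {f₀ : EuclideanSpace ℝ (Fin d) → ℝ} (hf₀ : f₀ ∈ H) (hf₀x : f₀ x = 0) :
    minInnerRisk (marginLoss φ) H x (1 / 2) = φ 0 := by
  have : Nonempty H := ⟨⟨f₀, hf₀⟩⟩
  refine le_antisymm ?_ (le_ciInf fun f => hφ.apply_zero_le_innerRisk_marginLoss_half f x)
  rw [← innerRisk_marginLoss_of_eq_zero (φ := φ) hf₀x (1 / 2)]
  exact ciInf_le ⟨φ 0, by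
    rintro _ ⟨f, rfl⟩; exact hφ.apply_zero_le_innerRisk_marginLoss_half f x⟩ (⟨f₀, hf₀⟩ : H)

end Margin

section Adversarial

variable {γ : ℝ} {f : EuclideanSpace ℝ (Fin d) → ℝ} {x : EuclideanSpace ℝ (Fin d)}

theorem advLoss_nonneg (y : ℝ) : 0 ≤ advLoss γ f x y :=
  Real.iSup_nonneg fun _ => by split <;> norm_num

theorem advLoss_le_one (y : ℝ) : advLoss γ f x y ≤ 1 :=
  Real.iSup_le (fun _ => by split <;> norm_num) zero_le_one

theorem advLoss_eq_one_of_mul_nonpos (hγ : 0 ≤ γ) {y : ℝ} (hy : y * f x ≤ 0) :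
    advLoss γ f x y = 1 := by
  refine le_antisymm (advLoss_le_one y) ?_
  have hbdd : BddAbove (Set.range fun x' : Metric.closedBall x γ =>
      if y * f x' ≤ 0 then (1 : ℝ) else 0) :=
    ⟨1, by rintro _ ⟨x', rfl⟩; dsimp only; split <;> norm_num⟩
  simpa [advLoss, hy] using le_ciSup hbdd ⟨x, Metric.mem_closedBall_self hγ⟩

theorem innerRisk_advLoss_of_eq_zero (hγ : 0 ≤ γ) (hfx : f x = 0) (η : ℝ) :
    innerRisk (advLoss γ) f x η = 1 := by
  simp only [innerRisk, advLoss_eq_one_of_mul_nonpos hγ (by simp [hfx] : (1 : ℝ) * f x ≤ 0),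
    advLoss_eq_one_of_mul_nonpos hγ (by simp [hfx] : (-1 : ℝ) * f x ≤ 0)]
  ring

theorem pos_of_infBall_pos (hf : 0 < infBall γ f x) {x' : EuclideanSpace ℝ (Fin d)}
    (hx' : x' ∈ Metric.closedBall x γ) : 0 < f x' := by
  have hbdd : BddBelow (Set.range fun x' : Metric.closedBall x γ => f x') := by
    by_contra hb
    rw [infBall, Real.iInf_of_not_bddBelow hb] at hf
    exact hf.false
  exact hf.trans_le (ciInf_le hbdd ⟨x', hx'⟩)

theorem advLoss_one_eq_zero_of_infBall_pos (hf : 0 < infBall γ f x) : advLoss γ f x 1 = 0 :=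
  le_antisymm (Real.iSup_le (fun x' => by
    rw [if_neg (by simpa using (pos_of_infBall_pos hf x'.2).not_ge)]) le_rfl) (advLoss_nonneg 1)

theorem minInnerRisk_advLoss_half_le {H : Set (EuclideanSpace ℝ (Fin d) → ℝ)} (hfH : f ∈ H)
    (hf : 0 < infBall γ f x) : minInnerRisk (advLoss γ) H x (1 / 2) ≤ 1 / 2 := by
  have hη : (1 / 2 : ℝ) ∈ Set.Icc (0 : ℝ) 1 := by norm_num
  calc minInnerRisk (advLoss γ) H x (1 / 2)
      ≤ innerRisk (advLoss γ) f x (1 / 2) :=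
        minInnerRisk_le_innerRisk (fun _ => advLoss_nonneg) hη hfH
    _ ≤ 1 / 2 := by
        have := advLoss_le_one (γ := γ) (f := f) (x := x) (-1)
        simp only [innerRisk, advLoss_one_eq_zero_of_infBall_pos hf]
        linarith

end Adversarial

theorem stmt1_general (d : ℕ) (γ : ℝ) (hγ0 : 0 < γ)
    (H : Set (EuclideanSpace ℝ (Fin d) → ℝ))
    (x0 : EuclideanSpace ℝ (Fin d)) (hx0 : Distinguishing γ H x0)
    (f0 : EuclideanSpace ℝ (Fin d) → ℝ) (hf0 : f0 ∈ H) (hf00 : f0 x0 = 0)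
    (φ : ℝ → ℝ) (hconv : ConvexOn ℝ Set.univ φ) :
    ¬ Calibrated H (marginLoss φ) (advLoss γ) := by
  obtain ⟨hx0norm, ⟨f1, hf1H, hf1⟩, -⟩ := hx0
  refine not_calibrated_of_minimizer hx0norm (η := 1 / 2) (by norm_num) hf0 ?_ ?_
  · rw [hconv.minInnerRisk_marginLoss_half hf0 hf00, innerRisk_marginLoss_of_eq_zero hf00]
  · rw [innerRisk_advLoss_of_eq_zero hγ0.le hf00]
    linarith [minInnerRisk_advLoss_half_le (H := H) hf1H hf1]

theorem stmt1 (d : ℕ) (hd : 1 ≤ d) (γ : ℝ) (hγ0 : 0 < γ) (hγ1 : γ < 1)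
    (H : Set (EuclideanSpace ℝ (Fin d) → ℝ))
    (x0 : EuclideanSpace ℝ (Fin d)) (hx0 : Distinguishing γ H x0)
    (f0 : EuclideanSpace ℝ (Fin d) → ℝ) (hf0 : f0 ∈ H) (hf00 : f0 x0 = 0)
    (φ : ℝ → ℝ) (hφ0 : ∀ t, 0 ≤ φ t) (hconv : ConvexOn ℝ Set.univ φ) :
    ¬ Calibrated H (marginLoss φ) (advLoss γ) :=
  stmt1_general d γ hγ0 H x0 hx0 f0 hf0 hf00 φ hconv

end
end

section
/- Let d ≥ 2. Let g : ℝ → ℝ be non-decreasing and continuous with g(1+γ) < G and g(−1−γ) > −G for some G ≥ 0. Let the margin-based loss φ : ℝ → [0,∞) be bounded, continuous, non-increasing and quasi-concave even, and assume φ(g(−t)−G) > φ(G−g(−t)) and g(−t) + g(t) ≥ 0 for every t ∈ [0,1]. Then φ is H_g-calibrated with respect to the adversarial 0/1 loss ℓ_γ if and only if for every t ∈ [0,1]: φ(G−g(−t)) + φ(g(−t)−G) = φ(g(t)+G) + φ(−g(t)−G), and min{φ(Ā(t)) + φ(−Ā(t)), φ(A̲(t)) + φ(−A̲(t))} > φ(G−g(−t))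 + φ(g(−t)−G), where Ā(t) = max_{s ∈ [−t,t]} (g(s) − g(s−γ)) and A̲(t) = min_{s ∈ [−t,t]} (g(s) − g(s+γ)). -/
open scoped RealInnerProductSpace

noncomputable section

variable {d : ℕ}

/-- Ā(t) = max_{s ∈ [−t,t]} (g(s) − g(s−γ)). -/
def Abar (g : ℝ → ℝ) (γ t : ℝ) : ℝ :=
  sSup ((fun s => g s - g (s - γ)) '' Set.Icc (-t) t)

/-- A̲(t) = min_{s ∈ [−t,t]} (g(s) − g(s+γ)). -/
def Alow (g : ℝ → ℝ) (γ t : ℝ) : ℝ :=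
  sInf ((fun s => g s - g (s + γ)) '' Set.Icc (-t) t)


/-!
For `f = g ⟪w, ·⟫ + b ∈ H_g` the margin risk at `x` depends only on `v = f x`, which ranges over
`[L, U] = [g (-‖x‖) - G, g ‖x‖ + G]`, while the adversarial risk only sees the signs of
`g (⟪w, x⟫ ∓ γ) + b`. By the definition of `A̲` and `Ā`, it can exceed its minimum
`min η (1 - η)` only if `v ≥ A̲` (for `η < 1/2`), `v ∈ [A̲, Ā]` (for `η = 1/2`) or `v ≤ Ā`
(for `η > 1/2`). Since `ψ t = φ t + φ (-t)` is even and quasi-concave, the two conditions make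
the margin risk strictly larger than its minimum (attained at `L` or `U`) on these compact ranges
of `v`, which gives calibration.

Conversely, if `ψ U < ψ L` then for `η` slightly below `1/2` near-minimisers of the margin risk
have `v ≥ 0`, so they are adversarially wrong with the larger weight `1 - η`. At `η = 1/2` the
hypotheses with `v = Ā` or `v = A̲` are adversarially wrong for both labels, so calibration keeps
their margin risk `ψ v / 2` strictly above the minimum `ψ L / 2`.
-/
open Set Filter Topology

def symLoss (φ : ℝ → ℝ) (t : ℝ) : ℝ := φ t + φ (-t)

def marginRisk (φ : ℝ → ℝ) (η v : ℝ) : ℝ := η * φ v + (1 - η) * φ (-v)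

section SymLoss

variable {φ : ℝ → ℝ} {η a b v : ℝ}

lemma symLoss_neg (φ : ℝ → ℝ) (t : ℝ) : symLoss φ (-t) = symLoss φ t := by
  rw [symLoss, symLoss, neg_neg, add_comm]

lemma QuasiconcaveOn.min_le_of_mem_Icc {f : ℝ → ℝ} (hf : QuasiconcaveOn ℝ univ f)
    (hv : v ∈ Icc a b) : min (f a) (f b) ≤ f v :=
  ((hf _).ordConnected.out ⟨trivial, min_le_left _ _⟩ ⟨trivial, min_le_right _ _⟩ hv).2

lemma symLoss_le_of_mem_Icc (hψ : QuasiconcaveOn ℝ univ (symLoss φ))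
    (hab : symLoss φ a ≤ symLoss φ b) (hv : v ∈ Icc a b) : symLoss φ a ≤ symLoss φ v := by
  simpa [min_eq_left hab] using hψ.min_le_of_mem_Icc hv

lemma apply_neg_lt_of_symLoss_lt (hφ : Antitone φ) (hab : a ≤ b)
    (h : symLoss φ a < symLoss φ b) : φ (-a) < φ (-b) := by
  unfold symLoss at h
  linarith [hφ hab]

lemma apply_lt_of_symLoss_lt (hφ : Antitone φ) (hba : b ≤ a)
    (h : symLoss φ a < symLoss φ b) : φ a < φ b := by
  unfold symLoss at h
  linarith [hφ (neg_le_neg hba)]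

lemma marginRisk_half (φ : ℝ → ℝ) (v : ℝ) : marginRisk φ (1 / 2) v = symLoss φ v / 2 := by
  rw [marginRisk, symLoss]
  ring

lemma marginRisk_le_of_le_half (hη0 : 0 ≤ η) (hη : η ≤ 1 / 2)
    (hψ : symLoss φ a ≤ symLoss φ v) (hφ : φ (-a) ≤ φ (-v)) :
    marginRisk φ η a ≤ marginRisk φ η v := by
  unfold marginRisk symLoss at *
  nlinarith

lemma marginRisk_lt_of_lt_half (hη0 : 0 ≤ η) (hη : η < 1 / 2)
    (hψ : symLoss φ a ≤ symLoss φ v) (hφ : φ (-a) < φ (-v)) :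
    marginRisk φ η a < marginRisk φ η v := by
  unfold marginRisk symLoss at *
  nlinarith

lemma marginRisk_lt_of_half_lt (hη : 1 / 2 < η) (hη1 : η ≤ 1)
    (hψ : symLoss φ a ≤ symLoss φ v) (hφ : φ a < φ v) :
    marginRisk φ η a < marginRisk φ η v := by
  unfold marginRisk symLoss at *
  nlinarith

lemma exists_lt_half_marginRisk_lt (h : symLoss φ b < symLoss φ a) :
    ∃ η ∈ Ico (0 : ℝ) (1 / 2), marginRisk φ η b < marginRisk φ η a := by
  have hcont : Continuous fun η => marginRisk φ η b - marginRisk φ η a := by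
    unfold marginRisk
    fun_prop
  have hhalf : marginRisk φ (1 / 2) b - marginRisk φ (1 / 2) a < 0 := by
    rw [marginRisk_half, marginRisk_half]
    linarith
  obtain ⟨η, hlt, hη⟩ :=
    ((((hcont.tendsto _).eventually (eventually_lt_nhds hhalf)).filter_mono
      nhdsWithin_le_nhds).and (Ioo_mem_nhdsLT (by norm_num : (0 : ℝ) < 1 / 2))).exists
  exact ⟨η, Ioo_subset_Ico_self hη, sub_neg.mp hlt⟩

end SymLoss

section InnerProductSpace

variable {E : Type*} [NormedAddCommGroup E] [InnerProductSpace ℝ E] {w x : E}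

lemma abs_inner_le_of_norm_eq_one (hw : ‖w‖ = 1) (x : E) : |⟪w, x⟫| ≤ ‖x‖ := by
  simpa [hw] using abs_real_inner_le_norm w x

lemma exists_norm_eq_one_inner_eq (hE : 1 < Module.rank ℝ E) {u : ℝ} (hu : |u| ≤ ‖x‖) :
    ∃ w : E, ‖w‖ = 1 ∧ ⟪w, x⟫ = u := by
  have hS := isConnected_sphere hE (0 : E) zero_le_one
  rcases eq_or_ne x 0 with rfl | hx
  · obtain ⟨w, hw⟩ := hS.nonempty
    have hu0 : u = 0 := abs_nonpos_iff.mp (by simpa using hu)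
    exact ⟨w, mem_sphere_zero_iff_norm.mp hw, by simp [hu0]⟩
  set e := ‖x‖⁻¹ • x
  have he : e ∈ Metric.sphere (0 : E) 1 := by
    simp [e, norm_smul, hx]
  have hex : ⟪e, x⟫ = ‖x‖ := by
    rw [real_inner_smul_left, real_inner_self_eq_norm_sq]
    field_simp
  have hne : -e ∈ Metric.sphere (0 : E) 1 := by simpa using he
  obtain ⟨w, hw, hwx⟩ := hS.isPreconnected.intermediate_value hne he
    (f := fun w => ⟪w, x⟫) (by fun_prop)
    (by simpa [inner_neg_left, hex] using abs_le.mp hu)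
  exact ⟨w, mem_sphere_zero_iff_norm.mp hw, hwx⟩

lemma image_inner_closedBall (hw : ‖w‖ = 1) (x : E) (γ : ℝ) :
    (fun z => ⟪w, z⟫) '' Metric.closedBall x γ = Icc (⟪w, x⟫ - γ) (⟪w, x⟫ + γ) := by
  ext u
  constructor
  · rintro ⟨z, hz, rfl⟩
    have := (abs_inner_le_of_norm_eq_one hw (z - x)).trans
      (by rwa [← dist_eq_norm, ← Metric.mem_closedBall])
    rw [inner_sub_right] at this
    constructor <;> linarith [abs_le.mp this]
  · intro hu
    refine ⟨x + (u - ⟪w, x⟫) • w, ?_, ?_⟩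
    · rw [Metric.mem_closedBall, dist_eq_norm, add_sub_cancel_left, norm_smul, hw, mul_one,
        Real.norm_eq_abs, abs_le]
      constructor <;> linarith [hu.1, hu.2]
    · simp [inner_add_right, real_inner_smul_right, hw]

end InnerProductSpace

lemma one_lt_rank_euclideanSpace {d : ℕ} (hd : 2 ≤ d) :
    1 < Module.rank ℝ (EuclideanSpace ℝ (Fin d)) := by
  rw [← Module.finrank_eq_rank, finrank_euclideanSpace_fin]
  exact_mod_cast hd

open Classical in
lemma ciSup_ite_one_zero {ι : Sort*} [Nonempty ι] (p : ι → Prop) [DecidablePred p] :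
    (⨆ i, if p i then (1 : ℝ) else 0) = if ∃ i, p i then 1 else 0 := by
  split_ifs with h
  · obtain ⟨i, hi⟩ := h
    refine le_antisymm (ciSup_le fun j => by split_ifs <;> norm_num) ?_
    refine le_trans (by simp [hi]) (le_ciSup ⟨1, ?_⟩ i)
    rintro _ ⟨j, rfl⟩
    dsimp only
    split_ifs <;> norm_num
  · push Not at h
    simp [h]

section Risks

variable {ℓ : Loss d} {H : Set (EuclideanSpace ℝ (Fin d) → ℝ)} {x : EuclideanSpace ℝ (Fin d)}
  {η m : ℝ}

lemma minInnerRisk_le (hbdd : ∀ f ∈ H, m ≤ innerRisk ℓ f x η) {f} (hf : f ∈ H) :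
    minInnerRisk ℓ H x η ≤ innerRisk ℓ f x η :=
  ciInf_le ⟨m, by rintro _ ⟨f, rfl⟩; exact hbdd f f.2⟩ (⟨f, hf⟩ : H)

lemma le_minInnerRisk (hH : H.Nonempty) (h : ∀ f ∈ H, m ≤ innerRisk ℓ f x η) :
    m ≤ minInnerRisk ℓ H x η :=
  have := hH.to_subtype
  le_ciInf fun f => h f f.2

lemma exists_innerRisk_lt_of_minInnerRisk_lt (hH : H.Nonempty) {a : ℝ}
    (h : minInnerRisk ℓ H x η < a) : ∃ f ∈ H, innerRisk ℓ f x η < a := by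
  have := hH.to_subtype
  obtain ⟨f, hf⟩ := exists_lt_of_ciInf_lt h
  exact ⟨f, f.2, hf⟩

lemma innerRisk_marginLoss (φ : ℝ → ℝ) (f : EuclideanSpace ℝ (Fin d) → ℝ) :
    innerRisk (marginLoss φ) f x η = marginRisk φ η (f x) := by
  simp [innerRisk, marginLoss, marginRisk]

end Risks

/-- The adversarial inner risk of `z ↦ g ⟪w, z⟫ + b` at a point `x` with `⟪w, x⟫ = u`. -/
def reducedAdvRisk (g : ℝ → ℝ) (γ η u b : ℝ) : ℝ :=
  η * (if g (u - γ) + b ≤ 0 then 1 else 0) + (1 - η) * (if 0 ≤ g (u + γ) + b then 1 else 0)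

section ReducedAdvRisk

variable {g : ℝ → ℝ} {γ η u b : ℝ}

lemma min_le_reducedAdvRisk (hγ : 0 ≤ γ) (hg : Monotone g) :
    min η (1 - η) ≤ reducedAdvRisk g γ η u b := by
  have := hg (show u - γ ≤ u + γ by linarith)
  unfold reducedAdvRisk
  split_ifs <;> linarith [min_le_left η (1 - η), min_le_right η (1 - η)]

lemma reducedAdvRisk_le_of_neg (hη0 : 0 ≤ η) (h : g (u + γ) + b < 0) :
    reducedAdvRisk g γ η u b ≤ η := by
  unfold reducedAdvRisk
  split_ifs <;> linarith

lemma reducedAdvRisk_le_of_pos (hη1 : η ≤ 1) (h : 0 < g (u - γ) + b) :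
    reducedAdvRisk g γ η u b ≤ 1 - η := by
  unfold reducedAdvRisk
  split_ifs <;> linarith

end ReducedAdvRisk

section Hg

variable {g : ℝ → ℝ} {γ G η u b v : ℝ} {w x : EuclideanSpace ℝ (Fin d)}

lemma mem_Hg (hw : ‖w‖ = 1) (hb : |b| ≤ G) : (fun z => g ⟪w, z⟫ + b) ∈ Hg d g G :=
  ⟨w, b, hw, hb, rfl⟩

open Classical in
lemma advLoss_one (hγ : 0 ≤ γ) (hg : Monotone g) (hw : ‖w‖ = 1) (b : ℝ) (x) :
    advLoss γ (fun z => g ⟪w, z⟫ + b) x 1 = if g (⟪w, x⟫ - γ) + b ≤ 0 then 1 else 0 := by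
  have := (Metric.nonempty_closedBall (x := x).mpr hγ).to_subtype
  simp only [advLoss, one_mul]
  rw [ciSup_ite_one_zero]
  refine if_congr ?_ rfl rfl
  simp only [Subtype.exists, exists_prop]
  rw [← exists_mem_image (f := fun z => ⟪w, z⟫) (p := fun u => g u + b ≤ 0),
    image_inner_closedBall hw]
  exact ⟨fun ⟨u, hu, h⟩ => by linarith [hg hu.1], fun h => ⟨_, ⟨le_rfl, by linarith⟩, h⟩⟩

open Classical in
lemma advLoss_neg_one (hγ : 0 ≤ γ) (hg : Monotone g) (hw : ‖w‖ = 1) (b : ℝ) (x) :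
    advLoss γ (fun z => g ⟪w, z⟫ + b) x (-1) = if 0 ≤ g (⟪w, x⟫ + γ) + b then 1 else 0 := by
  have := (Metric.nonempty_closedBall (x := x).mpr hγ).to_subtype
  simp only [advLoss, neg_one_mul, neg_nonpos]
  rw [ciSup_ite_one_zero]
  refine if_congr ?_ rfl rfl
  simp only [Subtype.exists, exists_prop]
  rw [← exists_mem_image (f := fun z => ⟪w, z⟫) (p := fun u => 0 ≤ g u + b),
    image_inner_closedBall hw]
  exact ⟨fun ⟨u, hu, h⟩ => by linarith [hg hu.2], fun h => ⟨_, ⟨by linarith, le_rfl⟩, h⟩⟩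

lemma innerRisk_advLoss_Hg (hγ : 0 ≤ γ) (hg : Monotone g) (hw : ‖w‖ = 1) (b : ℝ) (x) :
    innerRisk (advLoss γ) (fun z => g ⟪w, z⟫ + b) x η = reducedAdvRisk g γ η ⟪w, x⟫ b := by
  rw [innerRisk, advLoss_one hγ hg hw, advLoss_neg_one hγ hg hw, reducedAdvRisk]

lemma abs_apply_lt (hg : Monotone g) (hg1 : g (1 + γ) < G) (hg2 : -G < g (-1 - γ))
    {s : ℝ} (hs : |s| ≤ 1 + γ) : |g s| < G :=
  abs_lt.mpr ⟨hg2.trans_le (hg (by linarith [abs_le.mp hs])),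
    (hg (abs_le.mp hs).2).trans_lt hg1⟩

lemma add_mem_Icc_of_abs_le (hg : Monotone g) (hu : |u| ≤ ‖x‖) (hb : |b| ≤ G) :
    g u + b ∈ Icc (g (-‖x‖) - G) (g ‖x‖ + G) := by
  obtain ⟨hu1, hu2⟩ := abs_le.mp hu
  obtain ⟨hb1, hb2⟩ := abs_le.mp hb
  exact ⟨by linarith [hg hu1], by linarith [hg hu2]⟩

lemma apply_mem_Icc_of_mem_Hg (hg : Monotone g) {f} (hf : f ∈ Hg d g G) (x) :
    f x ∈ Icc (g (-‖x‖) - G) (g ‖x‖ + G) := by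
  obtain ⟨w, b, hw, hb, rfl⟩ := hf
  exact add_mem_Icc_of_abs_le hg (abs_inner_le_of_norm_eq_one hw x) hb

lemma sub_le_add_of_norm_le_one (hγ : 0 ≤ γ) (hg : Monotone g) (hg1 : g (1 + γ) < G)
    (hg2 : -G < g (-1 - γ)) (hx : ‖x‖ ≤ 1) : g (-‖x‖) - G ≤ g ‖x‖ + G := by
  have hr : |‖x‖| ≤ 1 + γ := by rw [abs_norm]; linarith
  linarith [abs_lt.mp (abs_apply_lt hg hg1 hg2 hr),
    abs_lt.mp (abs_apply_lt hg hg1 hg2 (abs_neg ‖x‖ ▸ hr))]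

lemma exists_mem_Hg_apply_eq (hd : 2 ≤ d) (hγ : 0 ≤ γ) (hg : Monotone g)
    (hg1 : g (1 + γ) < G) (hg2 : -G < g (-1 - γ)) (hx : ‖x‖ ≤ 1)
    (hv : v ∈ Icc (g (-‖x‖) - G) (g ‖x‖ + G)) : ∃ f ∈ Hg d g G, f x = v := by
  have hr : |‖x‖| ≤ 1 + γ := by rw [abs_norm]; linarith
  have hgl := abs_lt.mp (abs_apply_lt hg hg1 hg2 (abs_neg ‖x‖ ▸ hr))
  have hgr := abs_lt.mp (abs_apply_lt hg hg1 hg2 hr)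
  obtain ⟨u, hu, hb⟩ : ∃ u, |u| ≤ ‖x‖ ∧ |v - g u| ≤ G := by
    rcases le_or_gt v (g (-‖x‖) + G) with h | h
    · exact ⟨-‖x‖, by simp, abs_le.mpr ⟨by linarith [hv.1], by linarith⟩⟩
    · exact ⟨‖x‖, by simp, abs_le.mpr ⟨by linarith, by linarith [hv.2]⟩⟩
  obtain ⟨w, hw, hwx⟩ := exists_norm_eq_one_inner_eq (one_lt_rank_euclideanSpace hd) hu
  exact ⟨_, mem_Hg hw hb, by simp [hwx]⟩

lemma minInnerRisk_marginLoss_Hg_le (hd : 2 ≤ d) (hγ : 0 ≤ γ) (hg : Monotone g)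
    (hg1 : g (1 + γ) < G) (hg2 : -G < g (-1 - γ)) {φ : ℝ → ℝ} (hφ : Antitone φ)
    (hx : ‖x‖ ≤ 1) (hη : η ∈ Icc (0 : ℝ) 1) (hv : v ∈ Icc (g (-‖x‖) - G) (g ‖x‖ + G)) :
    minInnerRisk (marginLoss φ) (Hg d g G) x η ≤ marginRisk φ η v := by
  obtain ⟨f, hf, rfl⟩ := exists_mem_Hg_apply_eq hd hγ hg hg1 hg2 hx hv
  rw [← innerRisk_marginLoss]
  refine minInnerRisk_le (m := η * φ (g ‖x‖ + G) + (1 - η) * φ (-(g (-‖x‖) - G)))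
    (fun f' hf' => ?_) hf
  obtain ⟨h1, h2⟩ := apply_mem_Icc_of_mem_Hg hg hf' x
  rw [innerRisk_marginLoss, marginRisk]
  exact add_le_add (mul_le_mul_of_nonneg_left (hφ h2) hη.1)
    (mul_le_mul_of_nonneg_left (hφ (neg_le_neg h1)) (sub_nonneg.mpr hη.2))

lemma minInnerRisk_advLoss_Hg (hd : 2 ≤ d) (hγ : 0 ≤ γ) (hg : Monotone g) (hG : 0 ≤ G)
    (hg1 : g (1 + γ) < G) (hg2 : -G < g (-1 - γ)) :
    minInnerRisk (advLoss γ) (Hg d g G) x η = min η (1 - η) := by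
  obtain ⟨w, hw, hwx⟩ := exists_norm_eq_one_inner_eq (one_lt_rank_euclideanSpace hd)
    (x := x) (u := 0) (by simp)
  have hlow : ∀ f ∈ Hg d g G, min η (1 - η) ≤ innerRisk (advLoss γ) f x η := by
    rintro _ ⟨w', b', hw', -, rfl⟩
    rw [innerRisk_advLoss_Hg hγ hg hw']
    exact min_le_reducedAdvRisk hγ hg
  have hγabs : |γ| ≤ 1 + γ := by rw [abs_of_nonneg hγ]; linarith
  have hgγ := abs_lt.mp (abs_apply_lt hg hg1 hg2 hγabs)
  have hgnegγ := abs_lt.mp (abs_apply_lt hg hg1 hg2 (abs_neg γ ▸ hγabs))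
  refine le_antisymm ?_ (le_minInnerRisk ⟨_, mem_Hg hw (abs_of_nonneg hG).le⟩ hlow)
  -- with `b = -G` (resp. `b = G`) the prediction is negative (resp. positive) on the whole γ-ball
  rcases le_total η (1 - η) with h | h
  · refine (minInnerRisk_le hlow (mem_Hg hw (b := -G) (by simp [abs_of_nonneg hG]))).trans ?_
    rw [innerRisk_advLoss_Hg hγ hg hw, hwx, reducedAdvRisk, zero_sub, zero_add,
      if_pos (by linarith), if_neg (by linarith), min_eq_left h]
    linarith
  · refine (minInnerRisk_le hlow (mem_Hg hw (b := G) (abs_of_nonneg hG).le)).trans ?_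
    rw [innerRisk_advLoss_Hg hγ hg hw, hwx, reducedAdvRisk, zero_sub, zero_add,
      if_neg (by linarith), if_pos (by linarith), min_eq_right h]
    linarith

end Hg

section Extremes

variable {g : ℝ → ℝ} {γ G t u b : ℝ}

lemma isGreatest_Abar (hg : Continuous g) (γ : ℝ) (ht : 0 ≤ t) :
    IsGreatest ((fun s => g s - g (s - γ)) '' Icc (-t) t) (Abar g γ t) :=
  (isCompact_Icc.image (by fun_prop)).isGreatest_sSup ((nonempty_Icc.mpr (by linarith)).image _)

lemma isLeast_Alow (hg : Continuous g) (γ : ℝ) (ht : 0 ≤ t) :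
    IsLeast ((fun s => g s - g (s + γ)) '' Icc (-t) t) (Alow g γ t) :=
  (isCompact_Icc.image (by fun_prop)).isLeast_sInf ((nonempty_Icc.mpr (by linarith)).image _)

lemma add_neg_of_lt_Alow (hg : Continuous g) (hu : |u| ≤ t) (h : g u + b < Alow g γ t) :
    g (u + γ) + b < 0 := by
  have := (isLeast_Alow hg γ ((abs_nonneg u).trans hu)).2 ⟨u, abs_le.mp hu, rfl⟩
  linarith

lemma add_pos_of_Abar_lt (hg : Continuous g) (hu : |u| ≤ t) (h : Abar g γ t < g u + b) :
    0 < g (u - γ) + b := by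
  have := (isGreatest_Abar hg γ ((abs_nonneg u).trans hu)).2 ⟨u, abs_le.mp hu, rfl⟩
  linarith

lemma sub_le_Alow (hγ : 0 ≤ γ) (hgm : Monotone g) (hg : Continuous g) (hg1 : g (1 + γ) < G)
    (hg2 : -G < g (-1 - γ)) (ht : t ∈ Icc (0 : ℝ) 1) : g (-t) - G ≤ Alow g γ t := by
  obtain ⟨u, hu, hAl⟩ := (isLeast_Alow hg γ ht.1).1
  have := abs_lt.mp (abs_apply_lt hgm hg1 hg2 (s := u + γ)
    (abs_le.mpr ⟨by linarith [hu.1, ht.2], by linarith [hu.2, ht.2]⟩))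
  rw [← hAl]
  linarith [hgm hu.1]

lemma Abar_le_add (hγ : 0 ≤ γ) (hgm : Monotone g) (hg : Continuous g) (hg1 : g (1 + γ) < G)
    (hg2 : -G < g (-1 - γ)) (ht : t ∈ Icc (0 : ℝ) 1) : Abar g γ t ≤ g t + G := by
  obtain ⟨u, hu, hAb⟩ := (isGreatest_Abar hg γ ht.1).1
  have := abs_lt.mp (abs_apply_lt hgm hg1 hg2 (s := u - γ)
    (abs_le.mpr ⟨by linarith [hu.1, ht.2], by linarith [hu.2, ht.2]⟩))
  rw [← hAb]
  linarith [hgm hu.2]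

end Extremes

section Sufficiency

variable {g : ℝ → ℝ} {γ G η : ℝ} {φ : ℝ → ℝ} {x : EuclideanSpace ℝ (Fin d)}

/-- Compactness of `[p, q]` turns the pointwise gap `hgap` into a uniform `δ`. -/
lemma exists_pos_forall_advRisk_le (hγ : 0 ≤ γ) (hgm : Monotone g) (hφ : Continuous φ)
    {p q m : ℝ} (hm : minInnerRisk (marginLoss φ) (Hg d g G) x η ≤ m)
    (hgap : ∀ v ∈ Icc p q, m < marginRisk φ η v)
    (hout : ∀ u b, |u| ≤ ‖x‖ → |b| ≤ G → g u + b ∉ Icc p q →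
      reducedAdvRisk g γ η u b ≤ min η (1 - η)) :
    ∃ δ > 0, ∀ f ∈ Hg d g G,
      innerRisk (marginLoss φ) f x η < minInnerRisk (marginLoss φ) (Hg d g G) x η + δ →
      innerRisk (advLoss γ) f x η ≤ min η (1 - η) := by
  obtain ⟨m', hmm', hm'⟩ := isCompact_Icc.exists_forall_le'
    (by unfold marginRisk; fun_prop : Continuous (marginRisk φ η)).continuousOn hgap
  refine ⟨m' - m, sub_pos.mpr hmm', ?_⟩
  rintro _ ⟨w, b, hw, hb, rfl⟩ hlt
  rw [innerRisk_advLoss_Hg hγ hgm hw]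
  refine hout _ _ (abs_inner_le_of_norm_eq_one hw x) hb fun hv => ?_
  rw [innerRisk_marginLoss] at hlt
  linarith [hm' _ hv]

lemma exists_pos_forall_advRisk_le_min (hd : 2 ≤ d) (hγ : 0 ≤ γ) (hgm : Monotone g)
    (hgc : Continuous g) (hg1 : g (1 + γ) < G) (hg2 : -G < g (-1 - γ))
    (hφc : Continuous φ) (hφ : Antitone φ) (hψ : QuasiconcaveOn ℝ univ (symLoss φ))
    (hx : ‖x‖ ≤ 1) (hη : η ∈ Icc (0 : ℝ) 1)
    (hi : symLoss φ (g (-‖x‖) - G) = symLoss φ (g ‖x‖ + G))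
    (hAb : symLoss φ (g (-‖x‖) - G) < symLoss φ (Abar g γ ‖x‖))
    (hAl : symLoss φ (g (-‖x‖) - G) < symLoss φ (Alow g γ ‖x‖)) :
    ∃ δ > 0, ∀ f ∈ Hg d g G,
      innerRisk (marginLoss φ) f x η < minInnerRisk (marginLoss φ) (Hg d g G) x η + δ →
      innerRisk (advLoss γ) f x η ≤ min η (1 - η) := by
  have hr : ‖x‖ ∈ Icc (0 : ℝ) 1 := ⟨norm_nonneg x, hx⟩
  have hLAl := sub_le_Alow hγ hgm hgc hg1 hg2 hr
  have hAbU := Abar_le_add hγ hgm hgc hg1 hg2 hr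
  have hLU := sub_le_add_of_norm_le_one hγ hgm hg1 hg2 hx
  rcases lt_trichotomy η (1 / 2) with h | rfl | h
  · refine exists_pos_forall_advRisk_le hγ hgm hφc (p := Alow g γ ‖x‖) (q := g ‖x‖ + G)
      (minInnerRisk_marginLoss_Hg_le hd hγ hgm hg1 hg2 hφ hx hη ⟨le_rfl, hLU⟩)
      (fun v hv => ?_) (fun u b hu hb hv => ?_)
    · exact marginRisk_lt_of_lt_half hη.1 h
        (symLoss_le_of_mem_Icc hψ hi.le ⟨hLAl.trans hv.1, hv.2⟩)
        ((apply_neg_lt_of_symLoss_lt hφ hLAl hAl).trans_le (hφ (neg_le_neg hv.1)))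
    · have hv : g u + b < Alow g γ ‖x‖ :=
        lt_of_not_ge fun h' => hv ⟨h', (add_mem_Icc_of_abs_le hgm hu hb).2⟩
      rw [min_eq_left (by linarith)]
      exact reducedAdvRisk_le_of_neg hη.1 (add_neg_of_lt_Alow hgc hu hv)
  · refine exists_pos_forall_advRisk_le hγ hgm hφc (p := Alow g γ ‖x‖) (q := Abar g γ ‖x‖)
      (minInnerRisk_marginLoss_Hg_le hd hγ hgm hg1 hg2 hφ hx hη ⟨le_rfl, hLU⟩)
      (fun v hv => ?_) (fun u b hu hb hv => ?_)
    · rw [marginRisk_half, marginRisk_half]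
      linarith [hψ.min_le_of_mem_Icc hv, lt_min hAl hAb]
    · rw [show min (1 / 2 : ℝ) (1 - 1 / 2) = 1 / 2 by norm_num]
      rcases not_and_or.mp hv with hv | hv
      · exact reducedAdvRisk_le_of_neg (by norm_num) (add_neg_of_lt_Alow hgc hu (not_le.mp hv))
      · exact (reducedAdvRisk_le_of_pos (by norm_num)
          (add_pos_of_Abar_lt hgc hu (not_le.mp hv))).trans_eq (by norm_num)
  · refine exists_pos_forall_advRisk_le hγ hgm hφc (p := g (-‖x‖) - G) (q := Abar g γ ‖x‖)
      (minInnerRisk_marginLoss_Hg_le hd hγ hgm hg1 hg2 hφ hx hη ⟨hLU, le_rfl⟩)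
      (fun v hv => ?_) (fun u b hu hb hv => ?_)
    · exact marginRisk_lt_of_half_lt h hη.2
        (hi.symm.le.trans (symLoss_le_of_mem_Icc hψ hi.le ⟨hv.1, hv.2.trans hAbU⟩))
        ((apply_lt_of_symLoss_lt hφ hAbU (hi.symm.le.trans_lt hAb)).trans_le (hφ hv.2))
    · have hv : Abar g γ ‖x‖ < g u + b :=
        lt_of_not_ge fun h' => hv ⟨(add_mem_Icc_of_abs_le hgm hu hb).1, h'⟩
      rw [min_eq_right (by linarith)]
      exact reducedAdvRisk_le_of_pos hη.2 (add_pos_of_Abar_lt hgc hu hv)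

end Sufficiency

section Necessity

variable {g : ℝ → ℝ} {γ G : ℝ} {φ : ℝ → ℝ} {x : EuclideanSpace ℝ (Fin d)}

lemma symLoss_eq_of_calibrated (hd : 2 ≤ d) (hγ : 0 ≤ γ) (hgm : Monotone g) (hG : 0 ≤ G)
    (hg1 : g (1 + γ) < G) (hg2 : -G < g (-1 - γ)) (hφ : Antitone φ)
    (hψ : QuasiconcaveOn ℝ univ (symLoss φ)) (hgsum : 0 ≤ g (-‖x‖) + g ‖x‖) (hx : ‖x‖ ≤ 1)
    (hcal : Calibrated (Hg d g G) (marginLoss φ) (advLoss γ)) :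
    symLoss φ (g (-‖x‖) - G) = symLoss φ (g ‖x‖ + G) := by
  set L := g (-‖x‖) - G
  set U := g ‖x‖ + G
  have hLU := sub_le_add_of_norm_le_one hγ hgm hg1 hg2 hx
  have hL : L < 0 := by
    have := abs_lt.mp (abs_apply_lt hgm hg1 hg2 (s := -‖x‖) (by simp; linarith))
    linarith
  have hUL : symLoss φ U ≤ symLoss φ L := by
    simpa [symLoss_neg] using symLoss_le_of_mem_Icc hψ (a := -U) (b := U) (symLoss_neg φ U).le
      ⟨by linarith, hLU⟩
  refine (hUL.lt_or_eq.resolve_left fun hlt => ?_).symm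
  -- for `η` a little below `1/2`, margin risk favours `f x = U > 0`, adversarial risk `f < 0`
  obtain ⟨η, ⟨hη0, hη⟩, hηUL⟩ := exists_lt_half_marginRisk_lt hlt
  have hη' : η ∈ Icc (0 : ℝ) 1 := ⟨hη0, by linarith⟩
  obtain ⟨δ, hδ, hcal⟩ := hcal (1 - 2 * η) (by linarith) η hη' x hx
  have hmin := minInnerRisk_marginLoss_Hg_le hd hγ hgm hg1 hg2 hφ hx hη' ⟨hLU, le_rfl⟩
  obtain ⟨f₀, hf₀, -⟩ := exists_mem_Hg_apply_eq hd hγ hgm hg1 hg2 hx ⟨hLU, le_rfl⟩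
  obtain ⟨f, ⟨w, b, hw, hb, rfl⟩, hf⟩ := exists_innerRisk_lt_of_minInnerRisk_lt ⟨f₀, hf₀⟩
    (lt_min (lt_add_of_pos_right _ hδ) (hmin.trans_lt hηUL))
  rw [lt_min_iff] at hf
  have hv : 0 ≤ g ⟪w, x⟫ + b := by
    by_contra! hv
    have hmem := add_mem_Icc_of_abs_le hgm (abs_inner_le_of_norm_eq_one hw x) hb
    have := marginRisk_le_of_le_half hη0 hη.le (φ := φ)
      (symLoss_le_of_mem_Icc hψ (b := -L) (symLoss_neg φ L).ge ⟨hmem.1, by linarith⟩)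
      (hφ (neg_le_neg hmem.1))
    rw [innerRisk_marginLoss] at hf
    exact hf.2.not_ge this
  have hadv := hcal _ (mem_Hg hw hb) hf.1
  have hneg : 0 ≤ g (⟪w, x⟫ + γ) + b := by
    linarith [hgm (le_add_of_nonneg_right hγ : ⟪w, x⟫ ≤ ⟪w, x⟫ + γ)]
  rw [innerRisk_advLoss_Hg hγ hgm hw, minInnerRisk_advLoss_Hg hd hγ hgm hG hg1 hg2,
    min_eq_left (by linarith), reducedAdvRisk, if_pos hneg] at hadv
  have : 0 ≤ η * (if g (⟪w, x⟫ - γ) + b ≤ 0 then 1 else 0) := by positivity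
  linarith

lemma symLoss_lt_of_calibrated (hd : 2 ≤ d) (hγ : 0 ≤ γ) (hgm : Monotone g) (hG : 0 ≤ G)
    (hg1 : g (1 + γ) < G) (hg2 : -G < g (-1 - γ)) (hψ : QuasiconcaveOn ℝ univ (symLoss φ))
    (hx : ‖x‖ ≤ 1) (hcal : Calibrated (Hg d g G) (marginLoss φ) (advLoss γ))
    (hi : symLoss φ (g (-‖x‖) - G) = symLoss φ (g ‖x‖ + G)) {u b : ℝ} (hu : |u| ≤ ‖x‖)
    (hb : |b| ≤ G) (hpos : g (u - γ) + b ≤ 0) (hneg : 0 ≤ g (u + γ) + b) :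
    symLoss φ (g (-‖x‖) - G) < symLoss φ (g u + b) := by
  obtain ⟨δ, hδ, hcal⟩ := hcal (1 / 2) (by norm_num) (1 / 2) ⟨by norm_num, by norm_num⟩ x hx
  obtain ⟨w, hw, rfl⟩ := exists_norm_eq_one_inner_eq (one_lt_rank_euclideanSpace hd) hu
  have hmin :
      symLoss φ (g (-‖x‖) - G) / 2 ≤ minInnerRisk (marginLoss φ) (Hg d g G) x (1 / 2) := by
    refine le_minInnerRisk ⟨_, mem_Hg hw hb⟩ fun f hf => ?_
    rw [innerRisk_marginLoss, marginRisk_half]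
    linarith [symLoss_le_of_mem_Icc hψ hi.le (apply_mem_Icc_of_mem_Hg hgm hf x)]
  have hbad : ¬ innerRisk (advLoss γ) (fun z => g ⟪w, z⟫ + b) x (1 / 2) <
      minInnerRisk (advLoss γ) (Hg d g G) x (1 / 2) + 1 / 2 := by
    rw [innerRisk_advLoss_Hg hγ hgm hw, minInnerRisk_advLoss_Hg hd hγ hgm hG hg1 hg2,
      reducedAdvRisk, if_pos hpos, if_pos hneg]
    norm_num
  have := not_lt.mp (mt (hcal _ (mem_Hg hw hb)) hbad)
  rw [innerRisk_marginLoss, marginRisk_half] at this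
  linarith

lemma symLoss_lt_min_of_calibrated (hd : 2 ≤ d) (hγ : 0 ≤ γ) (hgm : Monotone g)
    (hgc : Continuous g) (hG : 0 ≤ G) (hg1 : g (1 + γ) < G) (hg2 : -G < g (-1 - γ))
    (hψ : QuasiconcaveOn ℝ univ (symLoss φ)) (hx : ‖x‖ ≤ 1)
    (hcal : Calibrated (Hg d g G) (marginLoss φ) (advLoss γ))
    (hi : symLoss φ (g (-‖x‖) - G) = symLoss φ (g ‖x‖ + G)) :
    symLoss φ (g (-‖x‖) - G) <
      min (symLoss φ (Abar g γ ‖x‖)) (symLoss φ (Alow g γ ‖x‖)) := by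
  have hbound : ∀ s, |s| ≤ ‖x‖ + γ → |-g s| ≤ G := fun s hs => by
    rw [abs_neg]
    exact (abs_apply_lt hgm hg1 hg2 (by linarith)).le
  obtain ⟨ub, hub, hAb⟩ := (isGreatest_Abar hgc γ (norm_nonneg x)).1
  obtain ⟨ul, hul, hAl⟩ := (isLeast_Alow hgc γ (norm_nonneg x)).1
  rw [← hAb, ← hAl]
  refine lt_min ?_ ?_
  · exact symLoss_lt_of_calibrated hd hγ hgm hG hg1 hg2 hψ hx hcal hi (abs_le.mpr hub)
      (hbound _ (abs_le.mpr ⟨by linarith [hub.1], by linarith [hub.2]⟩)) (by linarith)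
      (by linarith [hgm (show ub - γ ≤ ub + γ by linarith)])
  · exact symLoss_lt_of_calibrated hd hγ hgm hG hg1 hg2 hψ hx hcal hi (abs_le.mpr hul)
      (hbound _ (abs_le.mpr ⟨by linarith [hul.1], by linarith [hul.2]⟩))
      (by linarith [hgm (show ul - γ ≤ ul + γ by linarith)]) (by linarith)

end Necessity

theorem stmt10_general (d : ℕ) (hd : 2 ≤ d) (γ : ℝ) (hγ0 : 0 < γ)
    (g : ℝ → ℝ) (hgmono : Monotone g) (hgcont : Continuous g)
    (G : ℝ) (hG : 0 ≤ G) (hg1 : g (1 + γ) < G) (hg2 : -G < g (-1 - γ))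
    (φ : ℝ → ℝ) (hcont : Continuous φ) (hanti : Antitone φ)
    (hqce : QuasiconcaveOn ℝ Set.univ (fun t => φ t + φ (-t)))
    (hgsum : ∀ t ∈ Set.Icc (0:ℝ) 1, 0 ≤ g (-t) + g t) :
    Calibrated (Hg d g G) (marginLoss φ) (advLoss γ) ↔
      ∀ t ∈ Set.Icc (0:ℝ) 1,
        φ (G - g (-t)) + φ (g (-t) - G) = φ (g t + G) + φ (-(g t) - G) ∧
        φ (G - g (-t)) + φ (g (-t) - G) <
          min (φ (Abar g γ t) + φ (-(Abar g γ t)))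
              (φ (Alow g γ t) + φ (-(Alow g γ t))) := by
  have hψ : QuasiconcaveOn ℝ univ (symLoss φ) := hqce
  have hψL (t : ℝ) : φ (G - g (-t)) + φ (g (-t) - G) = symLoss φ (g (-t) - G) := by
    rw [symLoss, neg_sub, add_comm]
  have hψU (t : ℝ) : φ (g t + G) + φ (-(g t) - G) = symLoss φ (g t + G) := by
    rw [symLoss, neg_add']
  simp only [hψL, hψU]
  constructor
  · intro hcal t ht
    obtain ⟨x, rfl⟩ : ∃ x : EuclideanSpace ℝ (Fin d), ‖x‖ = t :=
      ⟨EuclideanSpace.single ⟨0, by omega⟩ t, by simp [ht.1]⟩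
    have hi :=
      symLoss_eq_of_calibrated hd hγ0.le hgmono hG hg1 hg2 hanti hψ (hgsum _ ht) ht.2 hcal
    exact ⟨hi, symLoss_lt_min_of_calibrated hd hγ0.le hgmono hgcont hG hg1 hg2 hψ ht.2 hcal hi⟩
  · intro hcond ε hε η hη x hx
    obtain ⟨hi, hii⟩ := hcond ‖x‖ ⟨norm_nonneg x, hx⟩
    obtain ⟨δ, hδ, hδf⟩ := exists_pos_forall_advRisk_le_min hd hγ0.le hgmono hgcont hg1 hg2
      hcont hanti hψ hx hη hi (lt_min_iff.mp hii).1 (lt_min_iff.mp hii).2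
    refine ⟨δ, hδ, fun f hf hlt => ?_⟩
    rw [minInnerRisk_advLoss_Hg hd hγ0.le hgmono hG hg1 hg2]
    linarith [hδf f hf hlt]

theorem stmt10 (d : ℕ) (hd : 2 ≤ d) (γ : ℝ) (hγ0 : 0 < γ) (hγ1 : γ < 1)
    (g : ℝ → ℝ) (hgmono : Monotone g) (hgcont : Continuous g)
    (G : ℝ) (hG : 0 ≤ G) (hg1 : g (1 + γ) < G) (hg2 : -G < g (-1 - γ))
    (φ : ℝ → ℝ) (hφ0 : ∀ t, 0 ≤ φ t) (hbdd : ∃ M, ∀ t, φ t ≤ M)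
    (hcont : Continuous φ) (hanti : Antitone φ)
    (hqce : QuasiconcaveOn ℝ Set.univ (fun t => φ t + φ (-t)))
    (hstrict : ∀ t ∈ Set.Icc (0:ℝ) 1, φ (G - g (-t)) < φ (g (-t) - G))
    (hgsum : ∀ t ∈ Set.Icc (0:ℝ) 1, 0 ≤ g (-t) + g t) :
    Calibrated (Hg d g G) (marginLoss φ) (advLoss γ) ↔
      ∀ t ∈ Set.Icc (0:ℝ) 1,
        φ (G - g (-t)) + φ (g (-t) - G) = φ (g t + G) + φ (-(g t) - G) ∧
        φ (G - g (-t)) + φ (g (-t) - G) <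
          min (φ (Abar g γ t) + φ (-(Abar g γ t)))
              (φ (Alow g γ t) + φ (-(Alow g γ t))) :=
  stmt10_general d hd γ hγ0 g hgmono hgcont G hG hg1 hg2 φ hcont hanti hqce hgsum

end
end
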